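/- arXiv:2509.24585 — 3 statements merged into one kernel-verified Lean document; each statement's English description precedes it below -/
import Mathlib

section
/- Let A be a Hermitian operator on a finite-dimensional complex Hilbert space H_S of dimension ≥ 1, and let H_A be any finite-dimensional complex Hilbert space of dimension ≥ 1. Then the supremum over unit vectors ψ ∈ H_S ⊗ H_A of the variance ⟨ψ, (A⊗I)²ψ⟩ − ⟨ψ, (A⊗I)ψ⟩² equals the supremum over unit vectors φ ∈ H_S of ⟨φ, A²φ⟩ − ⟨φ, Aφ⟩². -/
open Matrix Kronecker BigOperators

/-- Variance of a Hermitian operator with respect to a unit vector. -/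
noncomputable def varVec {n : Type*} [Fintype n]
    (B : Matrix n n ℂ) (ψ : n → ℂ) : ℝ :=
  (star ψ ⬝ᵥ (B * B) *ᵥ ψ).re - ((star ψ ⬝ᵥ B *ᵥ ψ).re) ^ 2

section Aux

variable {n : Type*} [Fintype n] [DecidableEq n]

lemma quad_form (U : Matrix n n ℂ) (d : n → ℂ) (ψ : n → ℂ) :
    star ψ ⬝ᵥ (U * diagonal d * star U) *ᵥ ψ
      = ∑ i, d i * (Complex.normSq ((star U *ᵥ ψ) i) : ℂ) := by
  set c := star U *ᵥ ψ with hc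
  have hsc : star ψ ᵥ* U = star c := by
    rw [hc, star_mulVec, star_eq_conjTranspose, conjTranspose_conjTranspose]
  calc star ψ ⬝ᵥ (U * diagonal d * star U) *ᵥ ψ
      = star ψ ⬝ᵥ U *ᵥ (diagonal d *ᵥ c) := by
        rw [hc, mulVec_mulVec, mulVec_mulVec]
    _ = (star ψ ᵥ* U) ⬝ᵥ (diagonal d *ᵥ c) := by rw [dotProduct_mulVec]
    _ = star c ⬝ᵥ (diagonal d *ᵥ c) := by rw [hsc]
    _ = ∑ i, d i * ((Complex.normSq (c i)) : ℂ) := by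
        simp only [dotProduct, mulVec_diagonal, Pi.star_apply]
        refine Finset.sum_congr rfl fun i _ => ?_
        rw [Complex.star_def, show (starRingEnd ℂ) (c i) * (d i * c i)
          = d i * ((starRingEnd ℂ) (c i) * c i) by ring, ← Complex.normSq_eq_conj_mul_self]

lemma varVec_diag (U : Matrix n n ℂ) (h2 : star U * U = 1) (lam : n → ℝ) (ψ : n → ℂ) :
    varVec (U * diagonal (fun i => (lam i : ℂ)) * star U) ψ
      = ∑ i, Complex.normSq ((star U *ᵥ ψ) i) * lam i ^ 2
        - (∑ i, Complex.normSq ((star U *ᵥ ψ) i) * lam i) ^ 2 := by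
  set B := U * diagonal (fun i => (lam i : ℂ)) * star U with hB
  have hBB : B * B = U * diagonal (fun i => ((lam i ^ 2 : ℝ) : ℂ)) * star U := by
    rw [hB]
    calc (U * diagonal (fun i => (lam i : ℂ)) * star U) *
          (U * diagonal (fun i => (lam i : ℂ)) * star U)
        = U * diagonal (fun i => (lam i : ℂ)) * (star U * U) *
            diagonal (fun i => (lam i : ℂ)) * star U := by
          simp only [Matrix.mul_assoc]
      _ = U * (diagonal (fun i => (lam i : ℂ)) * diagonal (fun i => (lam i : ℂ))) * star U := by
          rw [h2]; simp only [Matrix.mul_one, Matrix.mul_assoc]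
      _ = U * diagonal (fun i => ((lam i ^ 2 : ℝ) : ℂ)) * star U := by
          rw [diagonal_mul_diagonal]
          congr 1
          · congr 1; funext i; push_cast; ring
  unfold varVec
  rw [hBB, quad_form, quad_form]
  congr 1
  · rw [show (∑ i, ((lam i ^ 2 : ℝ) : ℂ) * (Complex.normSq ((star U *ᵥ ψ) i) : ℂ))
        = ((∑ i, Complex.normSq ((star U *ᵥ ψ) i) * lam i ^ 2 : ℝ) : ℂ) by push_cast; exact Finset.sum_congr rfl fun i _ => by ring]
    rw [Complex.ofReal_re]
  · congr 1
    rw [show (∑ i, ((lam i : ℝ) : ℂ) * (Complex.normSq ((star U *ᵥ ψ) i) : ℂ))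
        = ((∑ i, Complex.normSq ((star U *ᵥ ψ) i) * lam i : ℝ) : ℂ) by push_cast; exact Finset.sum_congr rfl fun i _ => by ring]
    rw [Complex.ofReal_re]

lemma norm_dist (U : Matrix n n ℂ) (h1 : U * star U = 1) (ψ : n → ℂ)
    (hψ : star ψ ⬝ᵥ ψ = 1) :
    ∑ i, Complex.normSq ((star U *ᵥ ψ) i) = 1 := by
  set c := star U *ᵥ ψ with hc
  have hsc : star ψ ᵥ* U = star c := by
    rw [hc, star_mulVec, star_eq_conjTranspose, conjTranspose_conjTranspose]
  have : star c ⬝ᵥ c = 1 := by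
    rw [← hsc, hc, dotProduct_mulVec, vecMul_vecMul, h1, vecMul_one, hψ]
  have h2 : (∑ i, (Complex.normSq (c i) : ℂ)) = 1 := by
    rw [← this]
    simp only [dotProduct, Pi.star_apply]
    refine Finset.sum_congr rfl fun i _ => ?_
    rw [Complex.star_def, ← Complex.normSq_eq_conj_mul_self]
  have := congrArg Complex.re h2
  simpa using this

/-- The set of variances over unit vectors equals the set of moment values over
probability distributions on eigenvalues. -/
lemma varSet_eq_momentSet (U : Matrix n n ℂ) (h1 : U * star U = 1) (h2 : star U * U = 1)
    (lam : n → ℝ) (B : Matrix n n ℂ)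
    (hB : B = U * diagonal (fun i => (lam i : ℂ)) * star U) :
    {v : ℝ | ∃ ψ : n → ℂ, star ψ ⬝ᵥ ψ = 1 ∧ v = varVec B ψ}
      = {v : ℝ | ∃ p : n → ℝ, (∀ i, 0 ≤ p i) ∧ ∑ i, p i = 1 ∧
          v = ∑ i, p i * lam i ^ 2 - (∑ i, p i * lam i) ^ 2} := by
  ext v
  constructor
  · rintro ⟨ψ, hψ, rfl⟩
    refine ⟨fun i => Complex.normSq ((star U *ᵥ ψ) i), fun i => Complex.normSq_nonneg _,
      norm_dist U h1 ψ hψ, ?_⟩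
    rw [hB, varVec_diag U h2 lam ψ]
  · rintro ⟨p, hp0, hp1, rfl⟩
    set s : n → ℂ := fun i => (Real.sqrt (p i) : ℂ) with hs
    refine ⟨U *ᵥ s, ?_, ?_⟩
    · have hc : star U *ᵥ (U *ᵥ s) = s := by
        rw [mulVec_mulVec, h2, one_mulVec]
      have : star (U *ᵥ s) ⬝ᵥ (U *ᵥ s) = star s ⬝ᵥ s := by
        rw [star_mulVec, dotProduct_mulVec, vecMul_vecMul, ← star_eq_conjTranspose,
          h2, vecMul_one]
      rw [this]
      have : star s ⬝ᵥ s = ((∑ i, p i : ℝ) : ℂ) := by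
        simp only [dotProduct, Pi.star_apply, hs]
        push_cast
        refine Finset.sum_congr rfl fun i _ => ?_
        rw [Complex.star_def, Complex.conj_ofReal, ← Complex.ofReal_mul,
          Real.mul_self_sqrt (hp0 i)]
      rw [this, hp1, Complex.ofReal_one]
    · have hc : star U *ᵥ (U *ᵥ s) = s := by
        rw [mulVec_mulVec, h2, one_mulVec]
      rw [hB, varVec_diag U h2 lam _, hc]
      have hns : ∀ i, Complex.normSq (s i) = p i := fun i => by
        simp [hs, Complex.normSq_ofReal, Real.mul_self_sqrt (hp0 i)]
      simp only [hns]

end Aux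

/-- Attaching an auxiliary system cannot change the maximal variance of `A ⊗ I`:
the supremum over unit vectors of `H_S ⊗ H_A` of the variance of `A ⊗ I` equals the
supremum over unit vectors of `H_S` of the variance of `A`. -/
theorem sup_variance_tensor_id_eq_sup_variance
    {nS nA : ℕ} (hnS : 1 ≤ nS) (hnA : 1 ≤ nA)
    (A : Matrix (Fin nS) (Fin nS) ℂ) (hA : A.IsHermitian) :
    sSup {v : ℝ | ∃ ψ : Fin nS × Fin nA → ℂ, star ψ ⬝ᵥ ψ = 1 ∧
        v = varVec (A ⊗ₖ (1 : Matrix (Fin nA) (Fin nA) ℂ)) ψ}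
      = sSup {v : ℝ | ∃ φ : Fin nS → ℂ, star φ ⬝ᵥ φ = 1 ∧ v = varVec A φ} := by
  classical
  set U : Matrix (Fin nS) (Fin nS) ℂ := (hA.eigenvectorUnitary : Matrix (Fin nS) (Fin nS) ℂ) with hU
  set lam : Fin nS → ℝ := hA.eigenvalues with hlam
  have h1 : U * star U = 1 := Matrix.mem_unitaryGroup_iff.mp hA.eigenvectorUnitary.2
  have h2 : star U * U = 1 := Matrix.mem_unitaryGroup_iff'.mp hA.eigenvectorUnitary.2
  have hAeq : A = U * diagonal (fun i => (lam i : ℂ)) * star U := hA.spectral_theorem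
  -- the tensored matrix
  set V : Matrix (Fin nS × Fin nA) (Fin nS × Fin nA) ℂ :=
      U ⊗ₖ (1 : Matrix (Fin nA) (Fin nA) ℂ) with hV
  have hVstar : star V = (star U) ⊗ₖ (1 : Matrix (Fin nA) (Fin nA) ℂ) := by
    ext ⟨i, j⟩ ⟨k, l⟩
    simp only [hV, star_eq_conjTranspose, conjTranspose_apply, kroneckerMap_apply,
      Matrix.one_apply, star_mul', apply_ite, star_one, star_zero, mul_ite, mul_one, mul_zero,
      ite_mul, one_mul, zero_mul]
    split_ifs with h h' h'
    · rfl
    · exact absurd h.symm h'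
    · exact absurd h'.symm h
    · rfl
  have hV1 : V * star V = 1 := by
    rw [hVstar, hV, ← mul_kronecker_mul, h1, Matrix.one_mul, one_kronecker_one]
  have hV2 : star V * V = 1 := by
    rw [hVstar, hV, ← mul_kronecker_mul, h2, Matrix.one_mul, one_kronecker_one]
  have hdiag : (diagonal (fun i => (lam i : ℂ))) ⊗ₖ (1 : Matrix (Fin nA) (Fin nA) ℂ)
      = diagonal (fun i : Fin nS × Fin nA => (lam i.1 : ℂ)) := by
    rw [show (1 : Matrix (Fin nA) (Fin nA) ℂ) = diagonal (fun _ => (1:ℂ)) by simp,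
      diagonal_kronecker_diagonal]
    congr 1; funext x; simp
  have hTeq : A ⊗ₖ (1 : Matrix (Fin nA) (Fin nA) ℂ)
      = V * diagonal (fun i : Fin nS × Fin nA => (lam i.1 : ℂ)) * star V := by
    rw [hVstar, hV, ← hdiag]
    calc A ⊗ₖ (1 : Matrix (Fin nA) (Fin nA) ℂ)
        = (U * diagonal (fun i => (lam i : ℂ)) * star U) ⊗ₖ
            ((1 : Matrix (Fin nA) (Fin nA) ℂ) * 1 * 1) := by rw [← hAeq]; simp
      _ = (U ⊗ₖ (1 : Matrix (Fin nA) (Fin nA) ℂ)) *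
            ((diagonal (fun i => (lam i : ℂ))) ⊗ₖ (1 : Matrix (Fin nA) (Fin nA) ℂ)) *
            ((star U) ⊗ₖ (1 : Matrix (Fin nA) (Fin nA) ℂ)) := by
          rw [← mul_kronecker_mul, ← mul_kronecker_mul]
  rw [varSet_eq_momentSet U h1 h2 lam A hAeq,
    varSet_eq_momentSet V hV1 hV2 (fun i => lam i.1) _ hTeq]
  congr 1
  ext v
  constructor
  · rintro ⟨q, hq0, hq1, rfl⟩
    refine ⟨fun i => ∑ j, q (i, j), fun i => Finset.sum_nonneg fun j _ => hq0 _, ?_, ?_⟩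
    · rw [← hq1, ← Fintype.sum_prod_type]
    · congr 1
      · rw [Fintype.sum_prod_type]
        refine Finset.sum_congr rfl fun i _ => ?_
        rw [Finset.sum_mul]
      · congr 1
        rw [Fintype.sum_prod_type]
        refine Finset.sum_congr rfl fun i _ => ?_
        rw [Finset.sum_mul]
  · rintro ⟨p, hp0, hp1, rfl⟩
    set j0 : Fin nA := ⟨0, hnA⟩
    refine ⟨fun x => if x.2 = j0 then p x.1 else 0,
      fun x => by dsimp; split <;> simp [hp0], ?_, ?_⟩
    · rw [Fintype.sum_prod_type]
      simp only [Finset.sum_ite_eq', Finset.mem_univ, if_true]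
      exact hp1
    · congr 1
      · rw [Fintype.sum_prod_type]
        refine Finset.sum_congr rfl fun i _ => ?_
        simp [Finset.sum_ite_eq', ite_mul]
      · congr 1
        rw [Fintype.sum_prod_type]
        refine Finset.sum_congr rfl fun i _ => ?_
        simp [Finset.sum_ite_eq', ite_mul]
end

section
/- Let A be a Hermitian operator on a finite-dimensional complex Hilbert space with largest eigenvalue λ_max and smallest eigenvalue λ_min. Then the supremum over unit vectors ψ of 4(⟨ψ, A²ψ⟩ − ⟨ψ, Aψ⟩²) equals (λ_max − λ_min)², and it is attained by ψ = (v_max + v_min)/√2 where v_max, v_min are orthonormal eigenvectors for λ_max and λ_min. -/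
open Matrix BigOperators

open ComplexConjugate in
private theorem dot_expand {n : ℕ} (A : Matrix (Fin n) (Fin n) ℂ) (hA : A.IsHermitian)
    (M : Matrix (Fin n) (Fin n) ℂ) (hM : M.IsHermitian) (μ : Fin n → ℝ)
    (hMe : ∀ j, M *ᵥ ⇑(hA.eigenvectorBasis j) = (μ j : ℂ) • ⇑(hA.eigenvectorBasis j))
    (ψ : Fin n → ℂ) :
    star ψ ⬝ᵥ M *ᵥ ψ = ∑ j, (μ j : ℂ) *
      (conj (star ⇑(hA.eigenvectorBasis j) ⬝ᵥ ψ) * (star ⇑(hA.eigenvectorBasis j) ⬝ᵥ ψ)) := by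
  have key := (hA.eigenvectorBasis).sum_inner_mul_inner
    ((WithLp.equiv 2 _).symm ψ) ((WithLp.equiv 2 _).symm (M *ᵥ ψ))
  rw [show inner ℂ ((WithLp.equiv 2 (Fin n → ℂ)).symm ψ) ((WithLp.equiv 2 (Fin n → ℂ)).symm (M *ᵥ ψ))
      = star ψ ⬝ᵥ M *ᵥ ψ from by rw [dotProduct_comm]; rfl] at key
  rw [← key]
  refine Finset.sum_congr rfl fun j _ => ?_
  have h1 : (inner ℂ (hA.eigenvectorBasis j) ((WithLp.equiv 2 _).symm (M *ᵥ ψ)) : ℂ)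
      = star ⇑(hA.eigenvectorBasis j) ⬝ᵥ (M *ᵥ ψ) := by
    rw [EuclideanSpace.inner_eq_star_dotProduct, dotProduct_comm]
    rfl
  have h2 : (inner ℂ ((WithLp.equiv 2 _).symm ψ) (hA.eigenvectorBasis j) : ℂ)
      = conj (star ⇑(hA.eigenvectorBasis j) ⬝ᵥ ψ) := by
    rw [← inner_conj_symm, EuclideanSpace.inner_eq_star_dotProduct, dotProduct_comm]
    rfl
  rw [h1, h2]
  have h3 : star ⇑(hA.eigenvectorBasis j) ⬝ᵥ (M *ᵥ ψ)
      = (μ j : ℂ) * (star ⇑(hA.eigenvectorBasis j) ⬝ᵥ ψ) := by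
    rw [dotProduct_mulVec, ← hM.eq, ← star_mulVec, hMe j]
    simp [smul_dotProduct]
  rw [h3]; ring

/-- Upper bound on the variance for a unit vector. -/
private theorem var_upper {n : ℕ} (A : Matrix (Fin n) (Fin n) ℂ) (hA : A.IsHermitian)
    (lmax lmin : ℝ)
    (hlo : ∀ j, lmin ≤ hA.eigenvalues j) (hhi : ∀ j, hA.eigenvalues j ≤ lmax)
    (ψ : Fin n → ℂ) (hψ : star ψ ⬝ᵥ ψ = 1) :
    4 * varVec A ψ ≤ (lmax - lmin) ^ 2 := by
  set c : Fin n → ℂ := fun j => star ⇑(hA.eigenvectorBasis j) ⬝ᵥ ψ with hc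
  set p : Fin n → ℝ := fun j => Complex.normSq (c j) with hp
  set lam : Fin n → ℝ := hA.eigenvalues with hlam
  have hconj : ∀ j, (starRingEnd ℂ) (c j) * c j = (p j : ℂ) := by
    intro j
    rw [mul_comm, Complex.mul_conj]
  -- sum of p is 1
  have hone : (1 : Matrix (Fin n) (Fin n) ℂ).IsHermitian := isHermitian_one
  have h1 : ∑ j, p j = 1 := by
    have := dot_expand A hA 1 hone (fun _ => 1) (fun j => by simp) ψ
    rw [one_mulVec, hψ] at this
    have : (1 : ℂ) = ∑ j, (p j : ℂ) := by
      rw [this]; refine Finset.sum_congr rfl fun j _ => ?_; rw [hconj]; simp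
    have := congrArg Complex.re this
    simpa using this.symm
  have hE1 : (star ψ ⬝ᵥ A *ᵥ ψ).re = ∑ j, lam j * p j := by
    have := dot_expand A hA A hA lam (fun j => hA.mulVec_eigenvectorBasis j) ψ
    rw [this]
    simp only [hconj]
    rw [Complex.re_sum]
    refine Finset.sum_congr rfl fun j _ => ?_
    push_cast
    simp [hp, hc, Complex.normSq_apply]
  have hAA : (A * A).IsHermitian := by
    rw [Matrix.IsHermitian, conjTranspose_mul, hA.eq]
  have hE2 : (star ψ ⬝ᵥ (A * A) *ᵥ ψ).re = ∑ j, lam j ^ 2 * p j := by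
    have hMe : ∀ j, (A * A) *ᵥ ⇑(hA.eigenvectorBasis j)
        = ((lam j ^ 2 : ℝ) : ℂ) • ⇑(hA.eigenvectorBasis j) := by
      intro j
      rw [← mulVec_mulVec, hA.mulVec_eigenvectorBasis, mulVec_smul,
        hA.mulVec_eigenvectorBasis, smul_smul]
      ext i
      simp only [Pi.smul_apply, Complex.real_smul, smul_eq_mul]
      push_cast
      ring
    have := dot_expand A hA (A * A) hAA (fun j => lam j ^ 2) hMe ψ
    rw [this]
    simp only [hconj]
    rw [Complex.re_sum]
    refine Finset.sum_congr rfl fun j _ => ?_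
    rw [show (starRingEnd ℂ) (star ⇑(hA.eigenvectorBasis j) ⬝ᵥ ψ) * star ⇑(hA.eigenvectorBasis j) ⬝ᵥ ψ
      = (p j : ℂ) from hconj j]
    norm_cast
  have hpnn : ∀ j, 0 ≤ p j := fun j => Complex.normSq_nonneg _
  -- key spectral inequality
  have hkey : ∑ j, lam j ^ 2 * p j
      ≤ (lmax + lmin) * (∑ j, lam j * p j) - lmax * lmin := by
    have hterm : ∀ j ∈ Finset.univ, (lam j - lmax) * (lam j - lmin) * p j ≤ 0 := by
      intro j _
      apply mul_nonpos_of_nonpos_of_nonneg _ (hpnn j)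
      exact mul_nonpos_of_nonpos_of_nonneg (by linarith [hhi j]) (by linarith [hlo j])
    have hsum := Finset.sum_nonpos hterm
    have hexp : ∑ j, (lam j - lmax) * (lam j - lmin) * p j
        = ∑ j, lam j ^ 2 * p j - (lmax + lmin) * (∑ j, lam j * p j)
          + lmax * lmin * (∑ j, p j) := by
      rw [Finset.mul_sum, Finset.mul_sum, ← Finset.sum_sub_distrib, ← Finset.sum_add_distrib]
      exact Finset.sum_congr rfl fun j _ => by ring
    rw [hexp, h1] at hsum
    linarith
  unfold varVec
  rw [hE1, hE2]
  nlinarith [sq_nonneg (2 * (∑ j, lam j * p j) - lmax - lmin), hkey]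

/-- The supremum of `4 Δ²A` over unit vectors is `(λ_max - λ_min)²`, attained at the
equal superposition of extremal eigenvectors. -/
theorem qfi_unitary_optimal
    {n : ℕ} (A : Matrix (Fin n) (Fin n) ℂ) (hA : A.IsHermitian)
    (lmax lmin : ℝ) (vmax vmin : Fin n → ℂ)
    (hvmaxUnit : star vmax ⬝ᵥ vmax = 1) (hvminUnit : star vmin ⬝ᵥ vmin = 1)
    (horth : star vmax ⬝ᵥ vmin = 0)
    (hvmax : A *ᵥ vmax = (lmax : ℂ) • vmax)
    (hvmin : A *ᵥ vmin = (lmin : ℂ) • vmin)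
    (hlargest : ∀ (μ : ℝ) (v : Fin n → ℂ), v ≠ 0 → A *ᵥ v = (μ : ℂ) • v →
      lmin ≤ μ ∧ μ ≤ lmax) :
    IsGreatest {x : ℝ | ∃ ψ : Fin n → ℂ, star ψ ⬝ᵥ ψ = 1 ∧ x = 4 * varVec A ψ}
      ((lmax - lmin) ^ 2) ∧
    4 * varVec A (((Real.sqrt 2 : ℂ))⁻¹ • (vmax + vmin)) = (lmax - lmin) ^ 2 := by
  -- eigenvalue bounds
  have hlo : ∀ j, lmin ≤ hA.eigenvalues j := by
    intro j
    have hnz : ⇑(hA.eigenvectorBasis j) ≠ (0 : Fin n → ℂ) := by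
      intro h
      apply hA.eigenvectorBasis.orthonormal.ne_zero j
      ext i
      exact congrFun h i
    exact (hlargest _ _ hnz (by
      rw [hA.mulVec_eigenvectorBasis]; norm_cast)).1
  have hhi : ∀ j, hA.eigenvalues j ≤ lmax := by
    intro j
    have hnz : ⇑(hA.eigenvectorBasis j) ≠ (0 : Fin n → ℂ) := by
      intro h
      apply hA.eigenvectorBasis.orthonormal.ne_zero j
      ext i
      exact congrFun h i
    exact (hlargest _ _ hnz (by
      rw [hA.mulVec_eigenvectorBasis]; norm_cast)).2
  -- the candidate state
  set s : ℂ := ((Real.sqrt 2 : ℂ))⁻¹ with hs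
  set ψ₀ : Fin n → ℂ := s • (vmax + vmin) with hψ₀
  have horth' : star vmin ⬝ᵥ vmax = 0 := by
    have := congrArg star horth
    rwa [star_dotProduct, star_star, star_zero] at this
  have hss : star s * s = (2 : ℂ)⁻¹ := by
    rw [hs]
    rw [star_inv₀]
    have : star ((Real.sqrt 2 : ℝ) : ℂ) = ((Real.sqrt 2 : ℝ) : ℂ) := by
      exact Complex.conj_ofReal _
    rw [this, ← mul_inv, ← Complex.ofReal_mul, Real.mul_self_sqrt (by norm_num)]
    norm_num
  have hstar : star ψ₀ = star s • (star vmax + star vmin) := by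
    rw [hψ₀, star_smul, star_add]
  have d1 : star ψ₀ ⬝ᵥ ψ₀ = 1 := by
    rw [hstar, hψ₀, smul_dotProduct, dotProduct_smul, add_dotProduct,
      dotProduct_add, dotProduct_add, hvmaxUnit, hvminUnit, horth, horth']
    rw [smul_eq_mul, smul_eq_mul, ← mul_assoc, hss]
    ring_nf
  have d2 : (star ψ₀ ⬝ᵥ A *ᵥ ψ₀).re = (lmax + lmin) / 2 := by
    have hAv : A *ᵥ ψ₀ = s • ((lmax : ℂ) • vmax + (lmin : ℂ) • vmin) := by
      rw [hψ₀, mulVec_smul, mulVec_add, hvmax, hvmin]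
    rw [hAv, hstar, smul_dotProduct, dotProduct_smul, add_dotProduct,
      dotProduct_add, dotProduct_add, dotProduct_smul, dotProduct_smul,
      dotProduct_smul, dotProduct_smul, hvmaxUnit, hvminUnit, horth, horth']
    simp only [smul_eq_mul, mul_zero, mul_one, add_zero, zero_add]
    rw [← mul_assoc, hss]
    have : (2 : ℂ)⁻¹ * ((lmax : ℂ) + (lmin : ℂ)) = (((lmax + lmin) / 2 : ℝ) : ℂ) := by
      push_cast; ring
    rw [mul_add, ← mul_add, this, Complex.ofReal_re]
  have d3 : (star ψ₀ ⬝ᵥ (A * A) *ᵥ ψ₀).re = (lmax ^ 2 + lmin ^ 2) / 2 := by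
    have hAv : (A * A) *ᵥ ψ₀ = s • ((lmax ^ 2 : ℂ) • vmax + (lmin ^ 2 : ℂ) • vmin) := by
      rw [hψ₀, mulVec_smul, ← mulVec_mulVec, mulVec_add, hvmax, hvmin,
        mulVec_add, mulVec_smul, mulVec_smul, hvmax, hvmin, smul_smul, smul_smul,
        ← pow_two, ← pow_two]
    rw [hAv, hstar, smul_dotProduct, dotProduct_smul, add_dotProduct,
      dotProduct_add, dotProduct_add, dotProduct_smul, dotProduct_smul,
      dotProduct_smul, dotProduct_smul, hvmaxUnit, hvminUnit, horth, horth']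
    simp only [smul_eq_mul, mul_zero, mul_one, add_zero, zero_add]
    rw [← mul_assoc, hss]
    have : (2 : ℂ)⁻¹ * ((lmax ^ 2 : ℂ) + (lmin ^ 2 : ℂ))
        = (((lmax ^ 2 + lmin ^ 2) / 2 : ℝ) : ℂ) := by
      push_cast; ring
    rw [mul_add, ← mul_add, this, Complex.ofReal_re]
  have hval : 4 * varVec A ψ₀ = (lmax - lmin) ^ 2 := by
    unfold varVec
    rw [d2, d3]
    ring
  refine ⟨⟨⟨ψ₀, d1, hval.symm⟩, ?_⟩, hval⟩
  rintro x ⟨ψ, hψ, rfl⟩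
  exact var_upper A hA lmax lmin hlo hhi ψ hψ
end

section
/- Let p : I → ℝ be a probability mass function on a finite set I and ε : I → ℝ. Suppose Σ_i p_i ε_i² − (Σ_i p_i ε_i)² = ((ε_max − ε_min)/2)², where ε_max = max_i ε_i and ε_min = min_i ε_i with ε_max > ε_min. Then p is supported on {i : ε_i = ε_max} ∪ {i : ε_i = ε_min}, with total mass 1/2 on each of the two level sets. -/
open BigOperators Finset

/-- Equality case of the variance bound: if the variance attains `((ε_max − ε_min)/2)²`,
then the distribution is supported on the extremal level sets of `ε`, with total mass `1/2`
on each. -/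
theorem variance_equality_case
    {I : Type*} [Fintype I] [DecidableEq I]
    (p : I → ℝ) (hp : ∀ i, 0 ≤ p i) (hpsum : ∑ i, p i = 1)
    (ε : I → ℝ) (εmax εmin : ℝ)
    (hmaxLe : ∀ i, ε i ≤ εmax) (hmaxMem : ∃ i, ε i = εmax)
    (hminLe : ∀ i, εmin ≤ ε i) (hminMem : ∃ i, ε i = εmin)
    (hlt : εmin < εmax)
    (heq : ∑ i, p i * (ε i) ^ 2 - (∑ i, p i * ε i) ^ 2 = ((εmax - εmin) / 2) ^ 2) :
    (∀ i, p i ≠ 0 → ε i = εmax ∨ ε i = εmin) ∧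
    (∑ i ∈ Finset.univ.filter (fun i => ε i = εmax), p i = 1 / 2) ∧
    (∑ i ∈ Finset.univ.filter (fun i => ε i = εmin), p i = 1 / 2) := by
  set μ := ∑ i, p i * ε i with hμdef
  set S := ∑ i, p i * ((εmax - ε i) * (ε i - εmin)) with hSdef
  have hterm : ∀ i : I, 0 ≤ p i * ((εmax - ε i) * (ε i - εmin)) := fun i =>
    mul_nonneg (hp i) (mul_nonneg (sub_nonneg.2 (hmaxLe i)) (sub_nonneg.2 (hminLe i)))
  have hSnn : 0 ≤ S := Finset.sum_nonneg fun i _ => hterm i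
  have expand : S = (εmax + εmin) * μ - εmax * εmin * (∑ i, p i)
      - ∑ i, p i * (ε i) ^ 2 := by
    rw [hSdef, hμdef, Finset.mul_sum, Finset.mul_sum, ← Finset.sum_sub_distrib,
      ← Finset.sum_sub_distrib]
    exact Finset.sum_congr rfl fun i _ => by ring
  rw [hpsum] at expand
  have key : S + (μ - (εmax + εmin) / 2) ^ 2 = 0 := by
    rw [expand]; linear_combination -heq
  have hS0 : S = 0 := le_antisymm (by nlinarith [sq_nonneg (μ - (εmax + εmin) / 2)]) hSnn
  have hμm : μ = (εmax + εmin) / 2 := by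
    have : (μ - (εmax + εmin) / 2) ^ 2 = 0 := by linarith
    have := pow_eq_zero_iff (n := 2) (by norm_num) |>.1 this
    linarith
  have hsupp : ∀ i, p i ≠ 0 → ε i = εmax ∨ ε i = εmin := by
    intro i hpi
    have hz := (Finset.sum_eq_zero_iff_of_nonneg (fun i _ => hterm i)).1 hS0 i (Finset.mem_univ i)
    rcases mul_eq_zero.1 hz with h | h
    · exact absurd h hpi
    · rcases mul_eq_zero.1 h with h | h
      · left; linarith [sub_eq_zero.1 h]
      · right; linarith [sub_eq_zero.1 h]
  set A := Finset.univ.filter (fun i => ε i = εmax) with hA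
  set B := Finset.univ.filter (fun i => ε i = εmin) with hB
  have hdisj : Disjoint A B := by
    rw [Finset.disjoint_left]
    intro i hiA hiB
    rw [hA, Finset.mem_filter] at hiA
    rw [hB, Finset.mem_filter] at hiB
    exact absurd (hiA.2.symm.trans hiB.2) (ne_of_gt hlt)
    
  have hzero : ∀ i ∈ Finset.univ, i ∉ A ∪ B → p i = 0 := by
    intro i _ hi
    by_contra hne
    rcases hsupp i hne with h | h
    · exact hi (Finset.mem_union_left _ (Finset.mem_filter.2 ⟨Finset.mem_univ i, h⟩))
    · exact hi (Finset.mem_union_right _ (Finset.mem_filter.2 ⟨Finset.mem_univ i, h⟩))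
  have hone : ∑ i ∈ A ∪ B, p i = 1 := by
    rw [← hpsum]
    exact Finset.sum_subset (Finset.subset_univ _) hzero
  have hab : ∑ i ∈ A, p i + ∑ i ∈ B, p i = 1 := by
    rw [← Finset.sum_union hdisj]; exact hone
  have hmean : εmax * ∑ i ∈ A, p i + εmin * ∑ i ∈ B, p i = (εmax + εmin) / 2 := by
    have h1 : ∑ i ∈ A ∪ B, p i * ε i = μ := by
      rw [hμdef]
      exact Finset.sum_subset (Finset.subset_univ _)
        (fun i _ hi => by rw [hzero i (Finset.mem_univ i) hi, zero_mul])
    rw [Finset.sum_union hdisj] at h1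
    have hA' : ∑ i ∈ A, p i * ε i = εmax * ∑ i ∈ A, p i := by
      rw [Finset.mul_sum]
      exact Finset.sum_congr rfl fun i hi => by
        rw [(Finset.mem_filter.1 hi).2]; ring
    have hB' : ∑ i ∈ B, p i * ε i = εmin * ∑ i ∈ B, p i := by
      rw [Finset.mul_sum]
      exact Finset.sum_congr rfl fun i hi => by
        rw [(Finset.mem_filter.1 hi).2]; ring
    rw [hA', hB'] at h1
    rw [h1, hμm]
  have hne : εmax - εmin ≠ 0 := sub_ne_zero.2 (ne_of_gt hlt)
  have ha : ∑ i ∈ A, p i = 1 / 2 := by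
    have h : (∑ i ∈ A, p i) * (εmax - εmin) = (1 / 2) * (εmax - εmin) := by
      linear_combination hmean - εmin * hab
    exact mul_right_cancel₀ hne h
  refine ⟨hsupp, ha, by linarith⟩
end
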